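/- arXiv:2110.07921 — 2 statements merged into one kernel-verified Lean document; each statement's English description precedes it below -/
import Mathlib

section
/- If the object rotates through all angles α ∈ [0, 2π], the k-space coverage 𝒴 = { R_α (k₁, κ(k₁) − k₀)ᵀ : |k₁| < k₀, α ∈ [0, 2π] }, where κ(k₁) = sqrt(k₀² − k₁²), satisfies 𝒴 = { y ∈ ℝ² : 0 < ‖y‖ < √2 k₀ } ∪ {0}. -/
/-- Rotation of ℝ² by angle α. -/
noncomputable def rot (α : ℝ) (p : ℝ × ℝ) : ℝ × ℝ :=
  (Real.cos α * p.1 - Real.sin α * p.2, Real.sin α * p.1 + Real.cos α * p.2)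

lemma exists_angle (X Y : ℝ) (h : X ^ 2 + Y ^ 2 = 1) :
    ∃ α ∈ Set.Icc (0 : ℝ) (2 * Real.pi), Real.cos α = X ∧ Real.sin α = Y := by
  have hX1 : -1 ≤ X := by nlinarith [sq_nonneg Y, sq_nonneg (X + 1)]
  have hX2 : X ≤ 1 := by nlinarith [sq_nonneg Y, sq_nonneg (X - 1)]
  have hc : Real.cos (Real.arccos X) = X := Real.cos_arccos hX1 hX2
  have hs : Real.sin (Real.arccos X) = Real.sqrt (1 - X ^ 2) := Real.sin_arccos X
  have hY2 : Y ^ 2 = 1 - X ^ 2 := by linarith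
  have hmem : Real.arccos X ∈ Set.Icc 0 Real.pi :=
    ⟨Real.arccos_nonneg X, Real.arccos_le_pi X⟩
  have hpi : 0 < Real.pi := Real.pi_pos
  rcases le_or_gt 0 Y with hY | hY
  · refine ⟨Real.arccos X, ⟨hmem.1, by linarith [hmem.2]⟩, hc, ?_⟩
    rw [hs, ← hY2, Real.sqrt_sq hY]
  · refine ⟨2 * Real.pi - Real.arccos X, ⟨by linarith [hmem.2], by linarith [hmem.1]⟩, ?_, ?_⟩
    · rw [Real.cos_sub, Real.cos_two_pi, Real.sin_two_pi]; simpa using hc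
    · rw [Real.sin_sub, Real.cos_two_pi, Real.sin_two_pi]
      have : Real.sqrt (1 - X ^ 2) = -Y := by
        rw [← hY2, show Y ^ 2 = (-Y) ^ 2 by ring, Real.sqrt_sq (by linarith)]
      simp [hs, this]

lemma rotate_to (a b c d s : ℝ) (hs : 0 < s) (hp : a ^ 2 + b ^ 2 = s)
    (hy : c ^ 2 + d ^ 2 = s) :
    ∃ α ∈ Set.Icc (0 : ℝ) (2 * Real.pi),
      c = Real.cos α * a - Real.sin α * b ∧ d = Real.sin α * a + Real.cos α * b := by
  have hXY : ((a * c + b * d) / s) ^ 2 + ((a * d - b * c) / s) ^ 2 = 1 := by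
    have key : (a * c + b * d) ^ 2 + (a * d - b * c) ^ 2
        = (a ^ 2 + b ^ 2) * (c ^ 2 + d ^ 2) := by ring
    rw [div_pow, div_pow, ← add_div, key, hp, hy, ← sq]
    exact div_self (by positivity)
  obtain ⟨α, hα, hcos, hsin⟩ := exists_angle _ _ hXY
  refine ⟨α, hα, ?_, ?_⟩
  · rw [hcos, hsin, div_mul_eq_mul_div, div_mul_eq_mul_div, ← sub_div]
    rw [show (a * c + b * d) * a - (a * d - b * c) * b = s * c by linear_combination c * hp]
    exact (mul_div_cancel_left₀ c hs.ne').symm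
  · rw [hcos, hsin, div_mul_eq_mul_div, div_mul_eq_mul_div, ← add_div]
    rw [show (a * d - b * c) * a + (a * c + b * d) * b = s * d by linear_combination d * hp]
    exact (mul_div_cancel_left₀ d hs.ne').symm

/-- For a full turn α ∈ [0, 2π], the k-space coverage equals
{ y : 0 < ‖y‖ < √2 k₀ } ∪ {0} (Euclidean norm). -/
theorem kspace_coverage_full_turn (k₀ : ℝ) (hk₀ : 0 < k₀) :
    {y : ℝ × ℝ | ∃ α ∈ Set.Icc (0 : ℝ) (2 * Real.pi), ∃ k₁ : ℝ, |k₁| < k₀ ∧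
        y = rot α (k₁, Real.sqrt (k₀ ^ 2 - k₁ ^ 2) - k₀)}
      = {y : ℝ × ℝ | 0 < Real.sqrt (y.1 ^ 2 + y.2 ^ 2) ∧
          Real.sqrt (y.1 ^ 2 + y.2 ^ 2) < Real.sqrt 2 * k₀} ∪ {(0, 0)} := by
  have h2k : Real.sqrt 2 * k₀ = Real.sqrt (2 * k₀ ^ 2) := by
    rw [Real.sqrt_mul (by norm_num), Real.sqrt_sq hk₀.le]
  ext y
  simp only [Set.mem_setOf_eq, Set.union_def, Set.mem_singleton_iff]
  constructor
  · rintro ⟨α, hα, k₁, hk₁, rfl⟩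
    set κ := Real.sqrt (k₀ ^ 2 - k₁ ^ 2) with hκ
    have hk₁2 : k₁ ^ 2 < k₀ ^ 2 := by
      have := sq_abs k₁
      nlinarith [abs_nonneg k₁]
    have hκ2 : κ ^ 2 = k₀ ^ 2 - k₁ ^ 2 := Real.sq_sqrt (by linarith)
    have hκpos : 0 < κ := Real.sqrt_pos.2 (by linarith)
    have hκle : κ ≤ k₀ := by nlinarith [sq_nonneg k₁]
    have hnorm : (rot α (k₁, κ - k₀)).1 ^ 2 + (rot α (k₁, κ - k₀)).2 ^ 2
        = 2 * k₀ * (k₀ - κ) := by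
      have hsc := Real.sin_sq_add_cos_sq α
      simp only [rot]
      nlinarith [hκ2]
    rcases eq_or_ne k₁ 0 with h0 | h0
    · right
      have : κ = k₀ := by
        rw [hκ, h0]; simpa using Real.sqrt_sq hk₀.le
      simp [rot, h0, this]
    · left
      have hκlt : κ < k₀ := by
        rcases lt_or_eq_of_le hκle with h | h
        · exact h
        · exfalso; have : k₁ ^ 2 = 0 := by nlinarith
          exact h0 (by nlinarith [sq_nonneg k₁])
      constructor
      · rw [hnorm]; exact Real.sqrt_pos.2 (by nlinarith)
      · rw [hnorm, h2k]
        exact Real.sqrt_lt_sqrt (by nlinarith) (by nlinarith)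
  · rintro (⟨h1, h2⟩ | h0)
    · -- construct k₁ and α
      set s := y.1 ^ 2 + y.2 ^ 2 with hs
      have hs0 : 0 < s := Real.sqrt_pos.1 h1
      have hs2 : s < 2 * k₀ ^ 2 :=
        (Real.sqrt_lt_sqrt_iff hs0.le).1 (h2k ▸ h2)
      set κ := k₀ - s / (2 * k₀) with hκdef
      have hκpos : 0 < κ := by
        rw [hκdef]
        have : s / (2 * k₀) < k₀ := by
          rw [div_lt_iff₀ (by positivity)]; nlinarith
        linarith
      have hκlt : κ < k₀ := by
        rw [hκdef]
        have : 0 < s / (2 * k₀) := by positivity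
        linarith
      set k₁ := Real.sqrt (k₀ ^ 2 - κ ^ 2) with hk₁def
      have hk₁pos : 0 < k₁ := Real.sqrt_pos.2 (by nlinarith)
      have hk₁sq : k₁ ^ 2 = k₀ ^ 2 - κ ^ 2 := Real.sq_sqrt (by nlinarith)
      have hk₁lt : |k₁| < k₀ := by
        rw [abs_of_pos hk₁pos]
        nlinarith
      have hκback : Real.sqrt (k₀ ^ 2 - k₁ ^ 2) = κ := by
        rw [hk₁sq]
        have : k₀ ^ 2 - (k₀ ^ 2 - κ ^ 2) = κ ^ 2 := by ring
        rw [this, Real.sqrt_sq hκpos.le]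
      set p : ℝ × ℝ := (k₁, κ - k₀) with hpdef
      have hpnorm : p.1 ^ 2 + p.2 ^ 2 = s := by
        simp only [hpdef]
        have : s = 2 * k₀ * (k₀ - κ) := by
          rw [hκdef]; field_simp; ring
        nlinarith [hk₁sq]
      obtain ⟨α, hα, h1', h2'⟩ := rotate_to p.1 p.2 y.1 y.2 s hs0 hpnorm hs.symm
      refine ⟨α, hα, k₁, hk₁lt, ?_⟩
      rw [hκback]
      simp only [rot, hpdef] at h1' h2' ⊢
      exact Prod.ext h1' h2'
    · exact ⟨0, ⟨le_refl 0, by positivity⟩, 0, by simpa using hk₀, by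
        simp [rot, h0, Real.sqrt_sq hk₀.le]⟩
end

section
/- For wave numbers k₀ ranging over the interval K = [k_min, k_max] with 0 < k_min ≤ k_max, the k-space coverage 𝒴 = { (k₁, κ − k₀)ᵀ : k₀ ∈ K, |k₁| < k₀ }, where κ = sqrt(k₀² − k₁²), consists exactly of those points (y₁, y₂) with |y₁| ≤ k_max and sqrt(k_max² − y₁²) − k_max ≥ y₂ ≥ g(y₁), where g(y₁) = −|y₁| if |y₁| ≥ k_min and g(y₁) = sqrt(k_min² − y₁²) − k_min otherwise (with strict inequalities where the open condition |k₁| < k₀ requires them). -/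
lemma aux_mono (a k K : ℝ) (ha : 0 ≤ a) (hak : a ≤ k) (hkK : k ≤ K) :
    Real.sqrt (k ^ 2 - a ^ 2) - k ≤ Real.sqrt (K ^ 2 - a ^ 2) - K := by
  have hk : 0 ≤ k := le_trans ha hak
  have hs2 : Real.sqrt (k ^ 2 - a ^ 2) ^ 2 = k ^ 2 - a ^ 2 :=
    Real.sq_sqrt (by nlinarith)
  have hS2 : Real.sqrt (K ^ 2 - a ^ 2) ^ 2 = K ^ 2 - a ^ 2 :=
    Real.sq_sqrt (by nlinarith)
  have hs0 : 0 ≤ Real.sqrt (k ^ 2 - a ^ 2) := Real.sqrt_nonneg _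
  have hS0 : 0 ≤ Real.sqrt (K ^ 2 - a ^ 2) := Real.sqrt_nonneg _
  set s := Real.sqrt (k ^ 2 - a ^ 2)
  set S := Real.sqrt (K ^ 2 - a ^ 2)
  have hsk : s ≤ k := by nlinarith
  have hSK : S ≤ K := by nlinarith [le_trans hk hkK]
  nlinarith [mul_nonneg (sub_nonneg.2 hkK) (by linarith : (0:ℝ) ≤ K + k - S - s),
    sq_nonneg (S + s)]

lemma aux_lb (a k : ℝ) (ha : 0 ≤ a) (hak : a ≤ k) :
    k - a ≤ Real.sqrt (k ^ 2 - a ^ 2) := by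
  have hs2 : Real.sqrt (k ^ 2 - a ^ 2) ^ 2 = k ^ 2 - a ^ 2 :=
    Real.sq_sqrt (by nlinarith)
  have hs0 : 0 ≤ Real.sqrt (k ^ 2 - a ^ 2) := Real.sqrt_nonneg _
  nlinarith

/-- k-space coverage for wave numbers k₀ ∈ [k_min, k_max]: two-sided inclusion between the
coverage 𝒴 and the region |y₁| ≤ k_max, g(y₁) ≤ y₂ ≤ sqrt(k_max² − y₁²) − k_max, where
g(y₁) = −|y₁| if |y₁| ≥ k_min and g(y₁) = sqrt(k_min² − y₁²) − k_min otherwise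
(strict inequality on the lower bound where the open condition |k₁| < k₀ requires it). -/
theorem kspace_coverage_interval (kmin kmax : ℝ) (h0 : 0 < kmin) (h1 : kmin ≤ kmax) :
    ({y : ℝ × ℝ | ∃ k₀ ∈ Set.Icc kmin kmax, ∃ k₁ : ℝ, |k₁| < k₀ ∧
        y = (k₁, Real.sqrt (k₀ ^ 2 - k₁ ^ 2) - k₀)} ⊆
      {y : ℝ × ℝ | |y.1| ≤ kmax ∧ y.2 ≤ Real.sqrt (kmax ^ 2 - y.1 ^ 2) - kmax ∧
        (if kmin ≤ |y.1| then -|y.1| else Real.sqrt (kmin ^ 2 - y.1 ^ 2) - kmin) ≤ y.2}) ∧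
    ({y : ℝ × ℝ | |y.1| ≤ kmax ∧ y.2 ≤ Real.sqrt (kmax ^ 2 - y.1 ^ 2) - kmax ∧
        (if kmin ≤ |y.1| then -|y.1| else Real.sqrt (kmin ^ 2 - y.1 ^ 2) - kmin) < y.2} ⊆
      {y : ℝ × ℝ | ∃ k₀ ∈ Set.Icc kmin kmax, ∃ k₁ : ℝ, |k₁| < k₀ ∧
        y = (k₁, Real.sqrt (k₀ ^ 2 - k₁ ^ 2) - k₀)}) := by
  constructor
  · rintro y ⟨k₀, ⟨hk₀min, hk₀max⟩, k₁, hk₁, rfl⟩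
    simp only [Set.mem_setOf_eq]
    have ha : 0 ≤ |k₁| := abs_nonneg _
    have hka : |k₁| ^ 2 = k₁ ^ 2 := sq_abs _
    refine ⟨le_trans hk₁.le hk₀max, ?_, ?_⟩
    · have := aux_mono |k₁| k₀ kmax ha hk₁.le hk₀max
      simpa [hka] using this
    · by_cases h : kmin ≤ |k₁|
      · simp only [h, if_true]
        have := aux_lb |k₁| k₀ ha hk₁.le
        simp only [hka] at this
        linarith
      · simp only [h, if_false]
        push_neg at h
        have := aux_mono |k₁| kmin k₀ ha h.le hk₀min
        simpa [hka] using this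
  · rintro ⟨y1, y2⟩ ⟨hy1, hy2max, hy2min⟩
    simp only [Set.mem_setOf_eq] at *
    have ha : 0 ≤ |y1| := abs_nonneg _
    have hka : |y1| ^ 2 = y1 ^ 2 := sq_abs _
    -- y₂ ≤ 0
    have hmax0 : Real.sqrt (kmax ^ 2 - y1 ^ 2) ≤ kmax := by
      have : Real.sqrt (kmax ^ 2 - y1 ^ 2) ≤ Real.sqrt (kmax ^ 2) := by
        apply Real.sqrt_le_sqrt; nlinarith
      rwa [Real.sqrt_sq (by linarith)] at this
    have hy20 : y2 ≤ 0 := by linarith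
    -- y₂ > -|y1|
    have hlb : -|y1| < y2 := by
      by_cases h : kmin ≤ |y1|
      · simpa [h] using hy2min
      · simp only [h, if_false] at hy2min
        push_neg at h
        have := aux_lb |y1| kmin ha h.le
        simp only [hka] at this
        linarith
    rcases eq_or_lt_of_le hy20 with h0' | h0'
    · -- y2 = 0 : forces y1 = 0
      have h1' : Real.sqrt (kmax ^ 2 - y1 ^ 2) = kmax := by
        have : kmax ≤ Real.sqrt (kmax ^ 2 - y1 ^ 2) := by linarith
        linarith
      have hy1z : y1 = 0 := by
        have := Real.sq_sqrt (by nlinarith : (0:ℝ) ≤ kmax ^ 2 - y1 ^ 2)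
        rw [h1'] at this
        nlinarith
      refine ⟨kmax, ⟨h1, le_refl _⟩, 0, by simpa using lt_of_lt_of_le h0 h1, ?_⟩
      have hs : Real.sqrt (kmax ^ 2 - 0 ^ 2) = kmax := by
        norm_num; exact Real.sqrt_sq (by linarith)
      simp only [Prod.mk.injEq]
      exact ⟨hy1z, by rw [hs]; linarith⟩
    · -- y2 < 0 : take k₀ = (y1² + y2²) / (-2 y2)
      obtain ⟨k₀, hk₀def⟩ : ∃ k₀ : ℝ, k₀ = (y1 ^ 2 + y2 ^ 2) / (-2 * y2) := ⟨_, rfl⟩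
      have hy2ne : y2 ≠ 0 := ne_of_lt h0'
      have hden : 0 < -2 * y2 := by linarith
      -- k₀ + y2 ≥ 0, i.e. y2² ≤ y1²
      have habs : y2 ^ 2 ≤ y1 ^ 2 := by nlinarith [sq_abs y1, hlb, abs_nonneg y1]
      have hky2 : 0 ≤ k₀ + y2 := by
        rw [hk₀def]
        rw [div_add' _ _ _ (ne_of_gt hden), le_div_iff₀ hden]
        nlinarith
      -- |y1| < k₀
      have hak : |y1| < k₀ := by
        rw [hk₀def, lt_div_iff₀ hden]
        nlinarith [sq_abs y1, sq_nonneg (|y1| + y2)]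
      -- kmin ≤ k₀
      have hmin : kmin ≤ k₀ := by
        rw [hk₀def, le_div_iff₀ hden]
        by_cases h : kmin ≤ |y1|
        · simp only [h, if_true] at hy2min
          nlinarith [sq_abs y1]
        · simp only [h, if_false] at hy2min
          push_neg at h
          have hs2 : Real.sqrt (kmin ^ 2 - y1 ^ 2) ^ 2 = kmin ^ 2 - y1 ^ 2 :=
            Real.sq_sqrt (by nlinarith [sq_abs y1])
          have hs0 : 0 ≤ Real.sqrt (kmin ^ 2 - y1 ^ 2) := Real.sqrt_nonneg _
          nlinarith
      -- k₀ ≤ kmax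
      have hmaxk : k₀ ≤ kmax := by
        rw [hk₀def, div_le_iff₀ hden]
        have hs2 : Real.sqrt (kmax ^ 2 - y1 ^ 2) ^ 2 = kmax ^ 2 - y1 ^ 2 :=
          Real.sq_sqrt (by nlinarith [sq_abs y1])
        have hs0 : 0 ≤ Real.sqrt (kmax ^ 2 - y1 ^ 2) := Real.sqrt_nonneg _
        have hposk : 0 ≤ y2 + kmax := by
          have : -kmax ≤ -|y1| := by
            have : |y1| ≤ kmax := hy1
            linarith
          linarith [hlb]
        have key : (y2 + kmax) ^ 2 ≤ Real.sqrt (kmax ^ 2 - y1 ^ 2) ^ 2 :=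
          pow_le_pow_left₀ hposk (by linarith) 2
        rw [hs2] at key
        linarith only [key]
      refine ⟨k₀, ⟨hmin, hmaxk⟩, y1, hak, ?_⟩
      have h2 : k₀ * (-2 * y2) = y1 ^ 2 + y2 ^ 2 := by
        rw [hk₀def]; field_simp
      have hsq : Real.sqrt (k₀ ^ 2 - y1 ^ 2) = k₀ + y2 := by
        rw [show k₀ ^ 2 - y1 ^ 2 = (k₀ + y2) ^ 2 by linear_combination h2]
        exact Real.sqrt_sq hky2
      rw [hsq]
      simp only [Prod.mk.injEq]
      constructor
      · trivial
      · ring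
end
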